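/- In any shortest valid path of length at least 3 in the marked cycle, no b-move is immediately followed by a d-move, and no d-move is immediately followed by a b-move. -/
import Mathlib


/-- The four move types in the marked cycle. -/
inductive Move : Type
  | a | b | c | d
deriving DecidableEq

/-- Where a move from node `x` in `ZMod k` leads. -/
def Move.step {k : ℕ} (x : ZMod k) : Move → ZMod k
  | .a => x - 1
  | .b => x
  | .c => x + 1
  | .d => x

/-- The node covered by a move performed from node `x`. -/
def Move.covers {k : ℕ} (x : ZMod k) : Move → ZMod k
  | .a => x - 1
  | .b => x
  | .c => x
  | .d => x - 1

/-- The node reached after performing a sequence of moves starting at `s`. -/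
def endAt {k : ℕ} (s : ZMod k) : List Move → ZMod k
  | [] => s
  | m :: ms => endAt (Move.step s m) ms

/-- The set of nodes covered by a sequence of moves starting at `s`. -/
def coveredSet {k : ℕ} (s : ZMod k) : List Move → Set (ZMod k)
  | [] => ∅
  | m :: ms => insert (Move.covers s m) (coveredSet (Move.step s m) ms)

/-- A valid path in the marked cycle on `ZMod k` with marked set `B`, start `s`,
end `t`: a nonempty sequence of moves from `s` to `t` covering every node of `B`. -/
def ValidPath {k : ℕ} (B : Set (ZMod k)) (s t : ZMod k) (p : List Move) : Prop :=
  p ≠ [] ∧ endAt s p = t ∧ B ⊆ coveredSet s p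

/-- A shortest valid path: valid and of minimum length among all valid paths. -/
def ShortestPath {k : ℕ} (B : Set (ZMod k)) (s t : ZMod k) (p : List Move) : Prop :=
  ValidPath B s t p ∧ ∀ q : List Move, ValidPath B s t q → p.length ≤ q.length


theorem endAt_append {k : ℕ} (s : ZMod k) (u v : List Move) :
    endAt s (u ++ v) = endAt (endAt s u) v := by
  induction u generalizing s with
  | nil => rfl
  | cons m ms ih => simp [endAt, ih]

theorem coveredSet_append {k : ℕ} (s : ZMod k) (u v : List Move) :
    coveredSet s (u ++ v) = coveredSet s u ∪ coveredSet (endAt s u) v := by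
  induction u generalizing s with
  | nil => simp [coveredSet, endAt]
  | cons m ms ih => simp [coveredSet, endAt, ih, Set.insert_union]

theorem key {k : ℕ} (B : Set (ZMod k)) (s t : ZMod k) (p : List Move)
    (hp : ShortestPath B s t p) (u seg seg' v : List Move)
    (hpe : p = u ++ seg ++ v) (hl : seg'.length < seg.length) (hne : seg' ≠ [])
    (hend : endAt (endAt s u) seg' = endAt (endAt s u) seg)
    (hcov : coveredSet (endAt s u) seg ⊆ coveredSet (endAt s u) seg') : False := by
  obtain ⟨⟨hne0, hend0, hcov0⟩, hmin⟩ := hp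
  have hq : ValidPath B s t (u ++ seg' ++ v) := by
    refine ⟨by simp [hne], ?_, ?_⟩
    · rw [← hend0, hpe]
      simp only [List.append_assoc, endAt_append, hend]
    · have hsub : coveredSet s (u ++ seg ++ v) ⊆ coveredSet s (u ++ seg' ++ v) := by
        simp only [List.append_assoc, coveredSet_append, endAt_append, hend]
        exact Set.union_subset_union_right _ (Set.union_subset_union_left _ hcov)
      exact fun x hx => hsub (hpe ▸ hcov0 hx)
  have := hmin _ hq
  rw [hpe] at this
  simp at this
  omega

/-- in a shortest valid path of length at least 3, no b-move is
immediately followed by a d-move and no d-move is immediately followed by a b-move. -/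
theorem no_bd_db (k : ℕ) (hk : 2 ≤ k) (B : Set (ZMod k)) (s t : ZMod k)
    (p : List Move) (hp : ShortestPath B s t p) (hlen : 3 ≤ p.length) :
    ¬ [Move.b, Move.d] <:+: p ∧ ¬ [Move.d, Move.b] <:+: p := by
  constructor
  · rintro ⟨u, v, rfl⟩
    cases v with
    | cons m v' =>
      cases m with
      | a => exact key B s t _ hp u [.b, .d, .a] [.b, .a] v' (by simp) (by simp) (by simp) rfl (by intro z hz; simp [coveredSet, Move.step, Move.covers] at hz ⊢; tauto)
      | b => exact key B s t _ hp u [.b, .d, .b] [.b, .d] v' (by simp) (by simp) (by simp) rfl (by intro z hz; simp [coveredSet, Move.step, Move.covers] at hz ⊢; tauto)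
      | c => exact key B s t _ hp u [.b, .d, .c] [.d, .c] v' (by simp) (by simp) (by simp) rfl (by intro z hz; simp [coveredSet, Move.step, Move.covers] at hz ⊢; tauto)
      | d => exact key B s t _ hp u [.b, .d, .d] [.b, .d] v' (by simp) (by simp) (by simp) rfl (by intro z hz; simp [coveredSet, Move.step, Move.covers] at hz ⊢; tauto)
    | nil =>
      rcases u.eq_nil_or_concat with rfl | ⟨u', m, rfl⟩
      · simp at hlen
      · cases m with
        | a => exact key B s t _ hp u' [.a, .b, .d] [.a, .d] [] (by simp) (by simp) (by simp) rfl (by intro z hz; simp [coveredSet, Move.step, Move.covers] at hz ⊢; tauto)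
        | b => exact key B s t _ hp u' [.b, .b, .d] [.b, .d] [] (by simp) (by simp) (by simp) rfl (by intro z hz; simp [coveredSet, Move.step, Move.covers] at hz ⊢; tauto)
        | c => exact key B s t _ hp u' [.c, .b, .d] [.c, .b] [] (by simp) (by simp) (by simp) rfl (by intro z hz; simp [coveredSet, Move.step, Move.covers] at hz ⊢; tauto)
        | d => exact key B s t _ hp u' [.d, .b, .d] [.d, .b] [] (by simp) (by simp) (by simp) rfl (by intro z hz; simp [coveredSet, Move.step, Move.covers] at hz ⊢; tauto)
  · rintro ⟨u, v, rfl⟩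
    cases v with
    | cons m v' =>
      cases m with
      | a => exact key B s t _ hp u [.d, .b, .a] [.b, .a] v' (by simp) (by simp) (by simp) rfl (by intro z hz; simp [coveredSet, Move.step, Move.covers] at hz ⊢; tauto)
      | b => exact key B s t _ hp u [.d, .b, .b] [.d, .b] v' (by simp) (by simp) (by simp) rfl (by intro z hz; simp [coveredSet, Move.step, Move.covers] at hz ⊢; tauto)
      | c => exact key B s t _ hp u [.d, .b, .c] [.d, .c] v' (by simp) (by simp) (by simp) rfl (by intro z hz; simp [coveredSet, Move.step, Move.covers] at hz ⊢; tauto)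
      | d => exact key B s t _ hp u [.d, .b, .d] [.d, .b] v' (by simp) (by simp) (by simp) rfl (by intro z hz; simp [coveredSet, Move.step, Move.covers] at hz ⊢; tauto)
    | nil =>
      rcases u.eq_nil_or_concat with rfl | ⟨u', m, rfl⟩
      · simp at hlen
      · cases m with
        | a => exact key B s t _ hp u' [.a, .d, .b] [.a, .d] [] (by simp) (by simp) (by simp) rfl (by intro z hz; simp [coveredSet, Move.step, Move.covers] at hz ⊢; tauto)
        | b => exact key B s t _ hp u' [.b, .d, .b] [.b, .d] [] (by simp) (by simp) (by simp) rfl (by intro z hz; simp [coveredSet, Move.step, Move.covers] at hz ⊢; tauto)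
        | c => exact key B s t _ hp u' [.c, .d, .b] [.c, .b] [] (by simp) (by simp) (by simp) rfl (by intro z hz; simp [coveredSet, Move.step, Move.covers] at hz ⊢; tauto)
        | d => exact key B s t _ hp u' [.d, .d, .b] [.d, .b] [] (by simp) (by simp) (by simp) rfl (by intro z hz; simp [coveredSet, Move.step, Move.covers] at hz ⊢; tauto)
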